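/- arXiv:1403.1629 — 2 statements merged into one kernel-verified Lean document; each statement's English description precedes it below -/
import Mathlib

section
/- Let ψ(r), r ≥ 1, be the positive integers defined by the recursion ψ(1) + 2ψ(2) + … + r(ψ(r) − 1) < r^r ≤ ψ(1) + 2ψ(2) + … + rψ(r), and set Ψ(r) = ψ(1) + 2ψ(2) + … + rψ(r). Then |ψ(r) − (r^r − (r−1)^{r−1})/r| < 1 for all r ≥ 2; consequently ψ(r)/r^{r−1} → 1 and Ψ(r)/r^r → 1 as r → ∞. -/
open Filter Finset Real

/-- Asymptotics of the sequences `ψ` and `Ψ` from the probabilistic model: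
`|ψ(r) − (r^r − (r−1)^{r−1})/r| < 1` for `r ≥ 2`, and consequently `ψ(r) ∼ r^{r−1}` and
`Ψ(r) ∼ r^r` as `r → ∞`. -/
theorem psi_asymptotics
    (ψ Ψ : ℕ → ℕ) (hψpos : ∀ r, 1 ≤ r → 0 < ψ r)
    (hΨ : ∀ r, Ψ r = ∑ i ∈ Finset.Icc 1 r, i * ψ i)
    (hψ : ∀ r, 1 ≤ r → Ψ (r - 1) + r * (ψ r - 1) < r ^ r ∧ r ^ r ≤ Ψ r) :
    (∀ r : ℕ, 2 ≤ r →
      |(ψ r : ℝ) - ((r : ℝ) ^ r - ((r : ℝ) - 1) ^ (r - 1)) / r| < 1) ∧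
    Filter.Tendsto (fun r : ℕ => (ψ r : ℝ) / (r : ℝ) ^ (r - 1)) Filter.atTop (nhds 1) ∧
    Filter.Tendsto (fun r : ℕ => (Ψ r : ℝ) / (r : ℝ) ^ r) Filter.atTop (nhds 1) := by
  -- recursion for Ψ
  have hrec : ∀ n : ℕ, Ψ (n + 1) = Ψ n + (n + 1) * ψ (n + 1) := by
    intro n
    rw [hΨ, hΨ]
    exact Finset.sum_Icc_succ_top (by omega) _
  -- sandwich bound on Ψ
  have hbound : ∀ r : ℕ, 1 ≤ r → r ^ r ≤ Ψ r ∧ Ψ r < r ^ r + r := by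
    intro r hr
    obtain ⟨h1, h2⟩ := hψ r hr
    refine ⟨h2, ?_⟩
    obtain ⟨n, rfl⟩ : ∃ n, r = n + 1 := ⟨r - 1, by omega⟩
    have hR := hrec n
    have hp := hψpos (n + 1) (by omega)
    simp only [Nat.add_sub_cancel] at h1
    obtain ⟨k, hk⟩ : ∃ k, ψ (n + 1) = k + 1 := ⟨ψ (n + 1) - 1, by omega⟩
    rw [hk] at h1 hR
    rw [mul_add, mul_one] at hR
    simp only [Nat.add_sub_cancel] at h1
    generalize (n + 1) * k = t at h1 hR
    omega
  -- bounds on r * ψ r for r ≥ 2, in ℝ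
  have hmul : ∀ n : ℕ, 1 ≤ n →
      ((n:ℝ) + 1) ^ (n + 1) - (n:ℝ) ^ n - (n:ℝ) + 1 ≤ ((n:ℝ) + 1) * (ψ (n + 1) : ℝ) ∧
      ((n:ℝ) + 1) * (ψ (n + 1) : ℝ) ≤ ((n:ℝ) + 1) ^ (n + 1) + (n:ℝ) + 1 - 1 - (n:ℝ) ^ n := by
    intro n hn
    have hA := hbound n hn
    have hB := hbound (n + 1) (by omega)
    have hR := hrec n
    have hA1 : ((n:ℝ)) ^ n ≤ (Ψ n : ℝ) := by exact_mod_cast hA.1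
    have hA2 : (Ψ n : ℝ) + 1 ≤ (n:ℝ) ^ n + n := by exact_mod_cast hA.2
    have hB1 : ((n:ℝ) + 1) ^ (n + 1) ≤ (Ψ (n + 1) : ℝ) := by exact_mod_cast hB.1
    have hB2 : (Ψ (n + 1) : ℝ) + 1 ≤ ((n:ℝ) + 1) ^ (n + 1) + ((n:ℝ) + 1) := by
      exact_mod_cast hB.2
    have hRR : (Ψ (n + 1) : ℝ) = (Ψ n : ℝ) + ((n:ℝ) + 1) * (ψ (n + 1) : ℝ) := by
      exact_mod_cast hR
    constructor <;> linarith
  -- the main pointwise bound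
  have key : ∀ r : ℕ, 2 ≤ r →
      |(ψ r : ℝ) - ((r : ℝ) ^ r - ((r : ℝ) - 1) ^ (r - 1)) / r| < 1 := by
    intro r hr
    obtain ⟨n, rfl⟩ : ∃ n, r = n + 1 := ⟨r - 1, by omega⟩
    have hn : 1 ≤ n := by omega
    obtain ⟨h1, h2⟩ := hmul n hn
    have hcast : ((n + 1 : ℕ) : ℝ) = (n : ℝ) + 1 := by push_cast; ring
    have hsub : ((n + 1 : ℕ) : ℝ) - 1 = (n : ℝ) := by push_cast; ring
    have hexp : (n + 1) - 1 = n := by omega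
    rw [hcast, hexp]
    have hsub' : (n:ℝ) + 1 - 1 = (n:ℝ) := by ring
    rw [hsub']
    have hRpos : (0:ℝ) < (n:ℝ) + 1 := by positivity
    have heq : (ψ (n + 1) : ℝ) - (((n:ℝ) + 1) ^ (n + 1) - (n:ℝ) ^ n) / ((n:ℝ) + 1)
        = (((n:ℝ) + 1) * (ψ (n + 1) : ℝ) - (((n:ℝ) + 1) ^ (n + 1) - (n:ℝ) ^ n)) / ((n:ℝ) + 1) := by
      field_simp
    rw [heq, abs_div, abs_of_pos hRpos, div_lt_one hRpos, abs_lt]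
    have hn1 : (1:ℝ) ≤ (n:ℝ) := by exact_mod_cast hn
    constructor <;> linarith
  refine ⟨key, ?_, ?_⟩
  · -- ψ r / r^(r-1) → 1
    rw [← tendsto_sub_nhds_zero_iff]
    apply squeeze_zero_norm' (a := fun r : ℕ => 3 / (r : ℝ))
    · filter_upwards [eventually_ge_atTop 2] with r hr
      obtain ⟨n, rfl⟩ : ∃ n, r = n + 1 := ⟨r - 1, by omega⟩
      have hn : 1 ≤ n := by omega
      obtain ⟨h1, h2⟩ := hmul n hn
      have hcast : ((n + 1 : ℕ) : ℝ) = (n : ℝ) + 1 := by push_cast; ring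
      have hexp : (n + 1) - 1 = n := by omega
      simp only [hcast, hexp, Real.norm_eq_abs]
      have hRpos : (0:ℝ) < (n:ℝ) + 1 := by positivity
      have hppos : (0:ℝ) < ((n:ℝ) + 1) ^ n := by positivity
      have hn1 : (1:ℝ) ≤ (n:ℝ) := by exact_mod_cast hn
      have hnn : (n:ℝ) ^ n ≤ ((n:ℝ) + 1) ^ n := by
        apply pow_le_pow_left₀ (by positivity) (by linarith)
      have hpow_big : (n:ℝ) + 1 ≤ ((n:ℝ) + 1) ^ n := by
        calc (n:ℝ) + 1 = ((n:ℝ) + 1) ^ 1 := by ring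
        _ ≤ ((n:ℝ) + 1) ^ n := by
            apply pow_le_pow_right₀ (by linarith) hn
      have hsucc : ((n:ℝ) + 1) ^ (n + 1) = ((n:ℝ) + 1) * ((n:ℝ) + 1) ^ n := by ring
      have heq : (ψ (n + 1) : ℝ) / ((n:ℝ) + 1) ^ n - 1
          = (((n:ℝ) + 1) * (ψ (n + 1) : ℝ) - ((n:ℝ) + 1) ^ (n + 1))
            / (((n:ℝ) + 1) * ((n:ℝ) + 1) ^ n) := by
        rw [hsucc]; field_simp
      rw [heq, abs_div,
        abs_of_pos (show (0:ℝ) < ((n:ℝ) + 1) * ((n:ℝ) + 1) ^ n by positivity)]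
      rw [div_le_div_iff₀ (by positivity) hRpos]
      have hnpos : (0:ℝ) ≤ (n:ℝ) ^ n := by positivity
      have habs : |((n:ℝ) + 1) * (ψ (n + 1) : ℝ) - ((n:ℝ) + 1) ^ (n + 1)|
          ≤ 3 * ((n:ℝ) + 1) ^ n := by
        rw [abs_le]
        constructor <;> linarith
      calc |((n:ℝ) + 1) * (ψ (n + 1) : ℝ) - ((n:ℝ) + 1) ^ (n + 1)| * ((n:ℝ) + 1)
          ≤ 3 * ((n:ℝ) + 1) ^ n * ((n:ℝ) + 1) := by
            apply mul_le_mul_of_nonneg_right habs (le_of_lt hRpos)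
        _ = 3 * (((n:ℝ) + 1) * ((n:ℝ) + 1) ^ n) := by ring
    · exact tendsto_const_div_atTop_nhds_zero_nat 3
  · -- Ψ r / r^r → 1
    rw [← tendsto_sub_nhds_zero_iff]
    apply squeeze_zero_norm' (a := fun r : ℕ => 3 / (r : ℝ))
    · filter_upwards [eventually_ge_atTop 2] with r hr
      have hr1 : 1 ≤ r := by omega
      obtain ⟨h1, h2⟩ := hbound r hr1
      have hrR : (2:ℝ) ≤ (r:ℝ) := by exact_mod_cast hr
      have hrpos : (0:ℝ) < (r:ℝ) := by linarith
      have hppos : (0:ℝ) < (r:ℝ) ^ r := by positivity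
      have h1' : (r:ℝ) ^ r ≤ (Ψ r : ℝ) := by exact_mod_cast h1
      have h2' : (Ψ r : ℝ) ≤ (r:ℝ) ^ r + r := by
        have : (Ψ r : ℝ) < (r:ℝ) ^ r + r := by exact_mod_cast h2
        linarith
      have hpow : (r:ℝ) * (r:ℝ) ≤ (r:ℝ) ^ r := by
        calc (r:ℝ) * (r:ℝ) = (r:ℝ) ^ 2 := by ring
        _ ≤ (r:ℝ) ^ r := by apply pow_le_pow_right₀ (by linarith) hr
      simp only [Real.norm_eq_abs]
      have heq : (Ψ r : ℝ) / (r:ℝ) ^ r - 1 = ((Ψ r : ℝ) - (r:ℝ) ^ r) / (r:ℝ) ^ r := by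
        field_simp
      rw [heq, abs_div, abs_of_pos hppos, div_le_div_iff₀ hppos hrpos]
      have habs : |(Ψ r : ℝ) - (r:ℝ) ^ r| ≤ (r:ℝ) := by
        rw [abs_le]; constructor <;> linarith
      calc |(Ψ r : ℝ) - (r:ℝ) ^ r| * (r:ℝ) ≤ (r:ℝ) * (r:ℝ) := by
            apply mul_le_mul_of_nonneg_right habs (le_of_lt hrpos)
        _ ≤ (r:ℝ) ^ r := hpow
        _ ≤ 3 * (r:ℝ) ^ r := by linarith
    · exact tendsto_const_div_atTop_nhds_zero_nat 3
end

section
/- Let (b_k)_{k≥1} be a strictly increasing sequence of positive integers and let ε > 0. Then for almost every real number x, ∑_{k=1}^N cos(2π b_k x) = O(N^{1/2+ε}) as N → ∞. -/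
/-!
The sums `S_N(x) = ∑_{k ≤ N} cos (2π b_k x)` have orthogonal increments on `[0, 1]`:
`∫₀¹ (S_n - S_m)² = (n - m) / 2`. By Chebyshev's inequality and a union bound, at level `M` every
dyadic block `S_{(i+1) 2^j} - S_{i 2^j}` inside `[0, 2^M]` is bounded by `λ_M = 2^{θM} / (M + 1)`
outside a set of measure `O(M³ 2^{(1 - 2θ) M})`, which is summable for `θ > 1/2`; by Borel–Cantelli
almost every `x` eventually satisfies all these bounds. Writing `[0, N]` with `N < 2^M` as a union
of at most one dyadic block per level then gives `|S_N(x)| ≤ M λ_M ≤ 2^{θM} ≤ (2N)^θ`; take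
`θ = 1/2 + ε`.
-/

open MeasureTheory Filter Finset Real Asymptotics

theorem integral_cos_two_pi_int_mul {n : ℤ} (hn : n ≠ 0) :
    ∫ x in (0 : ℝ)..1, cos (2 * π * n * x) = 0 := by
  have hc : 2 * π * n ≠ 0 := by have := (Int.cast_ne_zero (α := ℝ)).mpr hn; positivity
  rw [intervalIntegral.integral_comp_mul_left cos hc, integral_cos, mul_zero, sin_zero,
    mul_one, show 2 * π * n = ((2 * n : ℤ) : ℝ) * π by push_cast; ring, sin_int_mul_pi,
    sub_zero, smul_zero]

theorem integral_cos_mul_cos (p q : ℕ) (hp : p ≠ 0) :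
    ∫ x in (0 : ℝ)..1, cos (2 * π * p * x) * cos (2 * π * q * x) = if p = q then 1 / 2 else 0 := by
  have hprod : ∀ x : ℝ, cos (2 * π * p * x) * cos (2 * π * q * x) =
      (cos (2 * π * ((p - q : ℤ) : ℝ) * x) + cos (2 * π * ((p + q : ℤ) : ℝ) * x)) / 2 := by
    intro x
    push_cast
    rw [show 2 * π * ((p : ℝ) - q) * x = 2 * π * p * x - 2 * π * q * x by ring,
      show 2 * π * ((p : ℝ) + q) * x = 2 * π * p * x + 2 * π * q * x by ring,
      ← two_mul_cos_mul_cos]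
    ring
  have hint : ∀ n : ℤ, IntervalIntegrable (fun x => cos (2 * π * n * x)) volume 0 1 :=
    fun n => (by fun_prop : Continuous _).intervalIntegrable _ _
  simp_rw [hprod]
  rw [intervalIntegral.integral_div, intervalIntegral.integral_add (hint _) (hint _),
    integral_cos_two_pi_int_mul (n := p + q) (by omega)]
  split_ifs with h
  · simp [h]
  · rw [integral_cos_two_pi_int_mul (by omega)]
    norm_num

theorem integral_sq_sum_cos {ι : Type*} (s : Finset ι) {b : ι → ℕ} (hb : Set.InjOn b s)
    (hb0 : ∀ k ∈ s, b k ≠ 0) :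
    ∫ x in (0 : ℝ)..1, (∑ k ∈ s, cos (2 * π * b k * x)) ^ 2 = #s / 2 := by
  have hrow : ∀ k ∈ s, ∫ x in (0 : ℝ)..1, ∑ l ∈ s, cos (2 * π * b k * x) * cos (2 * π * b l * x)
      = 1 / 2 := by
    intro k hk
    rw [intervalIntegral.integral_finsetSum fun l _ =>
      (by fun_prop : Continuous _).intervalIntegrable _ _]
    simp_rw [integral_cos_mul_cos _ _ (hb0 k hk)]
    rw [sum_eq_single_of_mem k hk fun l hl hlk => if_neg fun h => hlk (hb hl hk h.symm)]
    simp
  simp_rw [sq, sum_mul_sum]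
  rw [intervalIntegral.integral_finsetSum fun k _ =>
    (by fun_prop : Continuous _).intervalIntegrable _ _, sum_congr rfl hrow, sum_const,
    nsmul_eq_mul]
  ring

theorem abs_sub_le_sum_of_abs_dyadic_increment_le (s B : ℕ → ℝ) {m N : ℕ} (hN : N < 2 ^ m)
    (h : ∀ j < m, ∀ i < 2 ^ (m - j), |s ((i + 1) * 2 ^ j) - s (i * 2 ^ j)| ≤ B j) :
    |s N - s 0| ≤ ∑ j ∈ range m, B j := by
  -- `t j` is `N` with its binary digits below `2 ^ j` cleared; consecutive `t j` differ by at
  -- most one dyadic block of length `2 ^ j`.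
  let t : ℕ → ℕ := fun j => N / 2 ^ j * 2 ^ j
  have htel : s N - s 0 = ∑ j ∈ range m, (s (t j) - s (t (j + 1))) := by
    rw [sum_range_sub' (fun j => s (t j))]
    simp [t, Nat.div_eq_of_lt hN]
  rw [htel]
  refine (abs_sum_le_sum_abs _ _).trans (sum_le_sum fun j hj => ?_)
  have hjm := mem_range.mp hj
  set i := 2 * (N / 2 ^ (j + 1))
  have hnext : t (j + 1) = i * 2 ^ j := by simp only [t, i, pow_succ]; ring
  have hdigit : N / 2 ^ j = i + N / 2 ^ j % 2 := by
    have := Nat.div_add_mod (N / 2 ^ j) 2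
    rw [Nat.div_div_eq_div_mul, ← pow_succ] at this
    omega
  have hlt : N / 2 ^ j < 2 ^ (m - j) := by
    rw [Nat.div_lt_iff_lt_mul (by positivity), ← pow_add, Nat.sub_add_cancel hjm.le]
    exact hN
  rcases Nat.mod_two_eq_zero_or_one (N / 2 ^ j) with h0 | h1
  · have : t j = t (j + 1) := by rw [hnext]; simp only [t]; rw [hdigit, h0, add_zero]
    rw [this, sub_self, abs_zero]
    exact (abs_nonneg _).trans (h j hjm 0 (by positivity))
  · have : t j = (i + 1) * 2 ^ j := by simp only [t]; rw [hdigit, h1]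
    rw [this, hnext]
    exact h j hjm i (by omega)

theorem Nat.tendsto_log_atTop {b : ℕ} (hb : 1 < b) : Tendsto (Nat.log b) atTop atTop :=
  tendsto_atTop_atTop.mpr fun M => ⟨b ^ M, fun _ hN => Nat.le_log_of_pow_le hb hN⟩

theorem isBigO_rpow_of_abs_dyadic_increment_le (s : ℕ → ℝ) {θ : ℝ} (hθ : 0 ≤ θ)
    (h : ∀ᶠ M : ℕ in atTop, ∀ j < M, ∀ i < 2 ^ (M - j),
      |s ((i + 1) * 2 ^ j) - s (i * 2 ^ j)| ≤ ((2 : ℝ) ^ θ) ^ M / (M + 1)) :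
    (fun N => s N - s 0) =O[atTop] fun N => (N : ℝ) ^ θ := by
  have hM : Tendsto (fun N => Nat.log 2 N + 1) atTop atTop :=
    (tendsto_add_atTop_nat 1).comp (Nat.tendsto_log_atTop one_lt_two)
  refine IsBigO.of_bound ((2 : ℝ) ^ θ) ?_
  filter_upwards [hM.eventually h, eventually_ne_atTop 0] with N hN hN0
  set M := Nat.log 2 N + 1
  have hNM : N < 2 ^ M := Nat.lt_pow_succ_log_self one_lt_two N
  have hMN : (2 : ℝ) ^ M ≤ 2 * N := by
    have := Nat.pow_log_le_self 2 hN0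
    exact_mod_cast (show 2 ^ M ≤ 2 * N by rw [pow_succ]; omega)
  rw [norm_of_nonneg (by positivity : (0 : ℝ) ≤ (N : ℝ) ^ θ), Real.norm_eq_abs]
  calc |s N - s 0| ≤ ∑ j ∈ range M, ((2 : ℝ) ^ θ) ^ M / (M + 1) :=
        abs_sub_le_sum_of_abs_dyadic_increment_le s _ hNM hN
    _ = M / (M + 1) * ((2 : ℝ) ^ θ) ^ M := by rw [sum_const, card_range, nsmul_eq_mul]; ring
    _ ≤ ((2 : ℝ) ^ θ) ^ M :=
        mul_le_of_le_one_left (by positivity) (div_le_one_of_le₀ (by linarith) (by positivity))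
    _ = ((2 : ℝ) ^ M) ^ θ := rpow_pow_comm zero_le_two θ M
    _ ≤ (2 * N) ^ θ := rpow_le_rpow (by positivity) hMN hθ
    _ = 2 ^ θ * N ^ θ := mul_rpow zero_le_two N.cast_nonneg

theorem summable_mul_add_one_sq_mul_geometric {q : ℝ} (hq0 : 0 ≤ q) (hq1 : q < 1) :
    Summable fun M : ℕ => (M : ℝ) * (M + 1) ^ 2 * q ^ M := by
  have h (k : ℕ) : Summable fun M : ℕ => (M : ℝ) ^ k * q ^ M :=
    summable_pow_mul_geometric_of_norm_lt_one k (by rwa [norm_of_nonneg hq0])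
  convert (h 3).add (((h 2).mul_left 2).add (h 1)) using 2 with M
  ring

section SquareIntegrableIncrements

variable {Ω : Type*} [MeasurableSpace Ω] {μ : Measure Ω}

theorem meas_abs_ge_le_integral_sq_div {f : Ω → ℝ}
    (hf : Integrable (fun ω => f ω ^ 2) μ) {t : ℝ} (ht : 0 < t) :
    μ {ω | t ≤ |f ω|} ≤ ENNReal.ofReal ((∫ ω, f ω ^ 2 ∂μ) / t ^ 2) := by
  have hset : {ω | t ≤ |f ω|} = {ω | t ^ 2 ≤ f ω ^ 2} := by
    ext ω
    simp only [Set.mem_ofPred_eq, ← sq_abs (f ω), sq_le_sq₀ ht.le (abs_nonneg _)]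
  rw [hset, ← ENNReal.ofReal_toReal (hf.measure_ge_lt_top (pow_pos ht 2)).ne]
  refine ENNReal.ofReal_le_ofReal ((le_div_iff₀ (pow_pos ht 2)).mpr ?_)
  rw [mul_comm]
  exact mul_meas_ge_le_integral_of_nonneg (ae_of_all _ fun ω => sq_nonneg _) hf _

variable {S : ℕ → Ω → ℝ} {C : ℝ}

theorem measure_exists_abs_dyadic_increment_gt_le
    (hint : ∀ m n, m ≤ n → Integrable (fun ω => (S n ω - S m ω) ^ 2) μ)
    (hL2 : ∀ m n, m ≤ n → ∫ ω, (S n ω - S m ω) ^ 2 ∂μ ≤ C * ↑(n - m)) (M : ℕ) {t : ℝ}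
    (ht : 0 < t) :
    μ {ω | ∃ j < M, ∃ i < 2 ^ (M - j), t < |S ((i + 1) * 2 ^ j) ω - S (i * 2 ^ j) ω|} ≤
      ENNReal.ofReal (C * M * 2 ^ M / t ^ 2) := by
  let incr (j i : ℕ) (ω : Ω) := S ((i + 1) * 2 ^ j) ω - S (i * 2 ^ j) ω
  have hle (j i : ℕ) : i * 2 ^ j ≤ (i + 1) * 2 ^ j := by gcongr; omega
  have hsub : {ω | ∃ j < M, ∃ i < 2 ^ (M - j), t < |incr j i ω|} ⊆
      ⋃ j ∈ range M, ⋃ i ∈ range (2 ^ (M - j)), {ω | t ≤ |incr j i ω|} := by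
    rintro ω ⟨j, hj, i, hi, hω⟩
    simp only [Set.mem_iUnion, mem_range]
    exact ⟨j, hj, i, hi, hω.le⟩
  calc μ {ω | ∃ j < M, ∃ i < 2 ^ (M - j), t < |incr j i ω|}
      ≤ ∑ j ∈ range M, ∑ i ∈ range (2 ^ (M - j)), μ {ω | t ≤ |incr j i ω|} :=
        (measure_mono hsub).trans <| (measure_biUnion_finset_le _ _).trans <|
          sum_le_sum fun j _ => measure_biUnion_finset_le _ _
    _ ≤ ∑ j ∈ range M, ∑ i ∈ range (2 ^ (M - j)),
          ENNReal.ofReal ((∫ ω, incr j i ω ^ 2 ∂μ) / t ^ 2) :=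
        sum_le_sum fun j _ => sum_le_sum fun i _ =>
          meas_abs_ge_le_integral_sq_div (hint _ _ (hle j i)) ht
    _ = ENNReal.ofReal (∑ j ∈ range M, ∑ i ∈ range (2 ^ (M - j)),
          (∫ ω, incr j i ω ^ 2 ∂μ) / t ^ 2) := by
        rw [ENNReal.ofReal_sum_of_nonneg fun j _ => sum_nonneg fun i _ =>
          div_nonneg (integral_nonneg fun ω => sq_nonneg _) (sq_nonneg t)]
        simp_rw [ENNReal.ofReal_sum_of_nonneg fun i _ =>
          div_nonneg (integral_nonneg fun ω => sq_nonneg _) (sq_nonneg t)]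
    _ ≤ ENNReal.ofReal (∑ j ∈ range M, ∑ _i ∈ range (2 ^ (M - j)), C * 2 ^ j / t ^ 2) := by
        refine ENNReal.ofReal_le_ofReal (sum_le_sum fun j _ => sum_le_sum fun i _ => ?_)
        refine div_le_div_of_nonneg_right ((hL2 _ _ (hle j i)).trans_eq ?_) (sq_nonneg t)
        rw [add_mul, one_mul, Nat.add_sub_cancel_left, Nat.cast_pow, Nat.cast_ofNat]
    _ = ENNReal.ofReal (C * M * 2 ^ M / t ^ 2) := by
        have hrow : ∀ j ∈ range M,
            ∑ _i ∈ range (2 ^ (M - j)), C * 2 ^ j / t ^ 2 = C * 2 ^ M / t ^ 2 := by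
          intro j hj
          rw [sum_const, card_range, nsmul_eq_mul, Nat.cast_pow, Nat.cast_ofNat, mul_div_assoc',
            mul_left_comm, ← pow_add, Nat.sub_add_cancel (mem_range.mp hj).le]
        rw [sum_congr rfl hrow, sum_const, card_range, nsmul_eq_mul]
        ring_nf

theorem ae_isBigO_rpow_of_integral_sq_sub_le
    (hint : ∀ m n, m ≤ n → Integrable (fun ω => (S n ω - S m ω) ^ 2) μ)
    (hL2 : ∀ m n, m ≤ n → ∫ ω, (S n ω - S m ω) ^ 2 ∂μ ≤ C * ↑(n - m)) {θ : ℝ}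
    (hθ : 1 / 2 < θ) :
    ∀ᵐ ω ∂μ, (fun N => S N ω - S 0 ω) =O[atTop] fun N => (N : ℝ) ^ θ := by
  set ρ : ℝ := 2 ^ θ
  have hρ2 : 2 < ρ ^ 2 := by
    rw [← rpow_mul_natCast zero_le_two]
    exact lt_of_eq_of_lt (rpow_one 2).symm
      (rpow_lt_rpow_of_exponent_lt one_lt_two (by push_cast; linarith))
  let bad (M : ℕ) : Set Ω := {ω | ∃ j < M, ∃ i < 2 ^ (M - j),
    ρ ^ M / (M + 1) < |S ((i + 1) * 2 ^ j) ω - S (i * 2 ^ j) ω|}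
  have hbad (M : ℕ) : μ (bad M) ≤ ENNReal.ofReal (C * (M * (M + 1) ^ 2 * (2 / ρ ^ 2) ^ M)) := by
    refine (measure_exists_abs_dyadic_increment_gt_le hint hL2 M (by positivity)).trans_eq ?_
    congr 1
    field_simp
    ring
  have hsum : ∑' M, μ (bad M) ≠ ⊤ :=
    ne_top_of_le_ne_top ((summable_mul_add_one_sq_mul_geometric (by positivity)
      ((div_lt_one (by positivity)).mpr hρ2)).mul_left C).tsum_ofReal_ne_top
      (ENNReal.tsum_le_tsum hbad)
  filter_upwards [ae_eventually_notMem hsum] with ω hω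
  refine isBigO_rpow_of_abs_dyadic_increment_le (S · ω) (by linarith) (hω.mono fun M hM => ?_)
  simpa [bad] using hM

end SquareIntegrableIncrements

theorem ae_of_ae_restrict_Ioc_of_periodic {P : ℝ → Prop} {T : ℝ} (hP : Function.Periodic P T)
    (hT : 0 < T) (t : ℝ) (h : ∀ᵐ x ∂volume.restrict (Set.Ioc t (t + T)), P x) : ∀ᵐ x, P x := by
  rw [ae_restrict_iff' measurableSet_Ioc] at h
  refine (isAddFundamentalDomain_Ioc hT t).measure_zero_of_invariant _ (fun g => ?_) ?_
  · ext x
    constructor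
    · rintro ⟨y, hy, rfl⟩
      simpa [hP.map_vadd_zmultiples] using hy
    · exact fun hx => ⟨-g +ᵥ x, by simpa [hP.map_vadd_zmultiples] using hx, vadd_neg_vadd g x⟩
  · refine measure_mono_null (fun x hx => ?_) (ae_iff.mp h)
    exact fun h' => hx.1 (h' hx.2)

theorem periodic_cos_two_pi_nat_mul (n : ℕ) :
    Function.Periodic (fun x => cos (2 * π * n * x)) 1 := fun x => by
  dsimp only
  rw [mul_add, mul_one, mul_comm (2 * π), cos_add_nat_mul_two_pi]

theorem sum_Icc_one_sub_sum_Icc_one {M : Type*} [AddCommGroup M] (f : ℕ → M) {m n : ℕ}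
    (h : m ≤ n) : ∑ k ∈ Icc 1 n, f k - ∑ k ∈ Icc 1 m, f k = ∑ k ∈ Ioc m n, f k := by
  have hIcc (k : ℕ) : Icc 1 k = Ioc 0 k := Icc_add_one_left_eq_Ioc 0 k
  rw [hIcc, hIcc, sub_eq_iff_eq_add', sum_Ioc_consecutive f m.zero_le h]

/-- Almost-everywhere square-root cancellation: for a strictly increasing sequence of positive
integers `(b_k)` and any `ε > 0`, for almost every `x` one has
`∑_{k=1}^N cos(2π b_k x) = O(N^{1/2+ε})` as `N → ∞`. -/
theorem cos_sum_sqrt_cancellation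
    (b : ℕ → ℕ) (hb : StrictMono b) (hbpos : ∀ k, 1 ≤ k → 0 < b k)
    (ε : ℝ) (hε : 0 < ε) :
    ∀ᵐ x ∂(volume : Measure ℝ),
      (fun N : ℕ => ∑ k ∈ Finset.Icc 1 N, Real.cos (2 * π * (b k : ℝ) * x))
        =O[Filter.atTop] (fun N : ℕ => (N : ℝ) ^ ((1:ℝ)/2 + ε)) := by
  set S : ℕ → ℝ → ℝ := fun N x => ∑ k ∈ Icc 1 N, cos (2 * π * b k * x)
  have hper :
      Function.Periodic (fun x => (S · x) =O[atTop] fun N : ℕ => (N : ℝ) ^ (1 / 2 + ε)) 1 :=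
    fun x => by simp only [S, fun k => periodic_cos_two_pi_nat_mul (b k) x]
  refine ae_of_ae_restrict_Ioc_of_periodic hper one_pos 0 ?_
  have hincr (m n : ℕ) (h : m ≤ n) :
      ∫ x in Set.Ioc (0 : ℝ) (0 + 1), (S n x - S m x) ^ 2 = 1 / 2 * ↑(n - m) := by
    have hb0 : ∀ k ∈ Ioc m n, b k ≠ 0 :=
      fun k hk => (hbpos k (Nat.one_le_of_lt (mem_Ioc.mp hk).1)).ne'
    simp only [S, sum_Icc_one_sub_sum_Icc_one _ h]
    rw [zero_add, ← intervalIntegral.integral_of_le zero_le_one,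
      integral_sq_sum_cos _ hb.injective.injOn hb0, Nat.card_Ioc]
    ring
  have hS := ae_isBigO_rpow_of_integral_sq_sub_le (μ := volume.restrict (Set.Ioc (0 : ℝ) (0 + 1)))
    (fun m n _ => (by fun_prop : Continuous fun x => (S n x - S m x) ^ 2).integrableOn_Ioc)
    (fun m n h => (hincr m n h).le) (by linarith : 1 / 2 < 1 / 2 + ε)
  simpa [S] using hS
end
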